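/- Let P and Q be finite nonempty sets of points in ℝ^M and let Q' = { q ∈ Q : no p ∈ P weakly dominates q } be the set of points of Q not weakly dominated by any point of P. If Q' is nonempty, then DoM(P, Q) = DoM(P, Q'). (This justifies Step 1 of the exact algorithm, which removes the points of Q that are dominated by at least one point of P.) -/
import Mathlib


/-- Point `p` weakly dominates point `q`: `p m ≤ q m` for every coordinate. -/
def WDom {M : ℕ} (p q : Fin M → ℝ) : Prop := ∀ m, p m ≤ q m

/-- Set `P` weakly dominates set `Q`. -/
def SetWDom {M : ℕ} (P Q : Finset (Fin M → ℝ)) : Prop :=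
  ∀ q ∈ Q, ∃ p ∈ P, WDom p q

/-- Manhattan distance. -/
noncomputable def mdist {M : ℕ} (p p' : Fin M → ℝ) : ℝ := ∑ m, |p m - p' m|

/-- Dominance move: infimum of total Manhattan move of a family `(f p)_{p ∈ P}`
whose image set weakly dominates `Q`. -/
noncomputable def DoM {M : ℕ} (P Q : Finset (Fin M → ℝ)) : ℝ :=
  sInf { c : ℝ | ∃ f : (Fin M → ℝ) → (Fin M → ℝ),
    (∀ q ∈ Q, ∃ p ∈ P, WDom (f p) q) ∧ c = ∑ p ∈ P, mdist p (f p) }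

lemma mdist_nonneg {M : ℕ} (p p' : Fin M → ℝ) : 0 ≤ mdist p p' :=
  Finset.sum_nonneg fun _ _ => abs_nonneg _

open Classical in
theorem dom_filter_nondominated_right {M : ℕ} (P Q : Finset (Fin M → ℝ))
    (hP : P.Nonempty) (hQ : Q.Nonempty)
    (hQ' : (Q.filter fun q => ∀ p ∈ P, ¬ WDom p q).Nonempty) :
    DoM P Q = DoM P (Q.filter fun q => ∀ p ∈ P, ¬ WDom p q) := by
  classical
  set Q' := Q.filter fun q => ∀ p ∈ P, ¬ WDom p q with hQ'def
  set S : Set ℝ := { c : ℝ | ∃ f : (Fin M → ℝ) → (Fin M → ℝ),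
    (∀ q ∈ Q, ∃ p ∈ P, WDom (f p) q) ∧ c = ∑ p ∈ P, mdist p (f p) } with hS
  set S' : Set ℝ := { c : ℝ | ∃ f : (Fin M → ℝ) → (Fin M → ℝ),
    (∀ q ∈ Q', ∃ p ∈ P, WDom (f p) q) ∧ c = ∑ p ∈ P, mdist p (f p) } with hS'
  have hbdd : BddBelow S := ⟨0, by
    rintro c ⟨f, -, rfl⟩
    exact Finset.sum_nonneg fun p _ => mdist_nonneg p (f p)⟩
  have hbdd' : BddBelow S' := ⟨0, by
    rintro c ⟨f, -, rfl⟩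
    exact Finset.sum_nonneg fun p _ => mdist_nonneg p (f p)⟩
  obtain ⟨p0, hp0⟩ := hP
  have hSne : S.Nonempty := by
    refine ⟨_, fun _ => fun m => Q.inf' hQ (fun q => q m), fun q hq => ⟨p0, hp0, ?_⟩, rfl⟩
    exact fun m => Finset.inf'_le _ hq
  have hsub : S ⊆ S' := by
    rintro c ⟨f, hf, rfl⟩
    exact ⟨f, fun q hq => hf q (Finset.filter_subset _ _ hq), rfl⟩
  have hS'ne : S'.Nonempty := hSne.mono hsub
  refine le_antisymm ?_ (csInf_le_csInf hbdd' hSne hsub)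
  refine le_csInf hS'ne ?_
  rintro c ⟨f, hf, rfl⟩
  set f' : (Fin M → ℝ) → (Fin M → ℝ) := fun p m => min (f p m) (p m) with hf'
  have hcover : ∀ q ∈ Q, ∃ p ∈ P, WDom (f' p) q := by
    intro q hq
    by_cases h : ∀ p ∈ P, ¬ WDom p q
    · obtain ⟨p, hp, hd⟩ := hf q (Finset.mem_filter.2 ⟨hq, h⟩)
      exact ⟨p, hp, fun m => le_trans (min_le_left _ _) (hd m)⟩
    · push_neg at h
      obtain ⟨p, hp, hd⟩ := h
      exact ⟨p, hp, fun m => le_trans (min_le_right _ _) (hd m)⟩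
  calc sInf S ≤ ∑ p ∈ P, mdist p (f' p) := csInf_le hbdd ⟨f', hcover, rfl⟩
    _ ≤ ∑ p ∈ P, mdist p (f p) := by
        refine Finset.sum_le_sum fun p _ => Finset.sum_le_sum fun m _ => ?_
        rcases le_total (f p m) (p m) with h | h
        · simp [hf', min_eq_left h]
        · simp [hf', min_eq_right h, abs_nonneg]
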